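/- arXiv:1603.09162 — 2 statements merged into one kernel-verified Lean document; each statement's English description precedes it below -/
import Mathlib

section
/- Let f : [0,1]^d → ℝ be continuous and φ₁(x) = max{y : (x,y) ∈ H_f} where H_f is the convex hull of the graph of f. Then for any x₀ ∈ [0,1]^d there exist points x₁, …, x_{d+1} ∈ [0,1]^d and weights p₁, …, p_{d+1} ≥ 0 with ∑ pᵢ = 1 such that x₀ = ∑ pᵢ xᵢ, f(xᵢ) = φ₁(xᵢ) for each i, and φ₁(x₀) = ∑ pᵢ f(xᵢ). -/
open Set Metric Filter

noncomputable section

def Cube (d : ℕ) : Set (Fin d → ℝ) := Set.Icc 0 1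

def graphHull (d : ℕ) (f : (Fin d → ℝ) → ℝ) : Set ((Fin d → ℝ) × ℝ) :=
  convexHull ℝ {p : (Fin d → ℝ) × ℝ | p.1 ∈ Cube d ∧ p.2 = f p.1}

def phi1 (d : ℕ) (f : (Fin d → ℝ) → ℝ) (x : Fin d → ℝ) : ℝ :=
  sSup {y : ℝ | (x, y) ∈ graphHull d f}

open Topology

/-!
The point `(x₀, φ₁ x₀)` lies in the compact convex set `H_f` but not in its interior, since
points just above it are not in `H_f`. A positive convex combination of `d + 2` affinely
independent points has positive barycentric coordinates and hence lies in the interior of their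
simplex, so Carathéodory's theorem at a boundary point needs only `d + 1` points of the graph.
Jensen's inequality for the concave function `φ₁`, together with `f ≤ φ₁`, then forces
`f = φ₁` at each of these points.
-/

universe u

section ConvexCombination

variable {ι κ M : Type*} [Fintype ι] [Fintype κ] [AddCommMonoid M]

theorem Function.Injective.sum_extend_zero_smul_invFun {R : Type*} [Semiring R] [Module R M]
    [Nonempty ι] {e : ι → κ} (he : e.Injective) (w : ι → R) (g : ι → M) :
    ∑ j, Function.extend e w 0 j • g (Function.invFun e j) = ∑ i, w i • g i := by
  refine (Fintype.sum_of_injective e he (fun i => w i • g i) _ (fun j hj => ?_) fun i => ?_).symm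
  · rw [Function.extend_apply' _ _ _ hj, Pi.zero_apply, zero_smul]
  · rw [he.extend_apply, Function.leftInverse_invFun he i]

theorem exists_fin_convex_combination_of_card_le [Module ℝ M] {n : ℕ} (hn : Fintype.card ι ≤ n)
    (z : ι → M) {w : ι → ℝ} (hw₀ : ∀ i, 0 ≤ w i) (hw₁ : ∑ i, w i = 1) :
    ∃ (p : Fin n → ℝ) (σ : Fin n → ι),
      p ∈ stdSimplex ℝ (Fin n) ∧ ∑ j, p j • z (σ j) = ∑ i, w i • z i := by
  have : Nonempty ι := by
    by_contra h
    rw [not_nonempty_iff] at h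
    simp at hw₁
  obtain ⟨e⟩ : Nonempty (ι ↪ Fin n) := Function.Embedding.nonempty_of_card_le (by simpa using hn)
  refine ⟨Function.extend e w 0, Function.invFun e, ⟨fun j => ?_, ?_⟩,
    e.injective.sum_extend_zero_smul_invFun w z⟩
  · by_cases hj : ∃ i, e i = j
    · obtain ⟨i, rfl⟩ := hj
      rw [e.injective.extend_apply]
      exact hw₀ i
    · rw [Function.extend_apply' _ _ _ hj, Pi.zero_apply]
  · simpa [hw₁] using e.injective.sum_extend_zero_smul_invFun w fun _ => (1 : ℝ)

end ConvexCombination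

section FiniteDimensional

variable {E : Type u} [NormedAddCommGroup E] [NormedSpace ℝ E] [FiniteDimensional ℝ E]

theorem AffineIndependent.card_le_finrank_add_one {ι : Type*} [Fintype ι] {z : ι → E}
    (hz : AffineIndependent ℝ z) : Fintype.card ι ≤ Module.finrank ℝ E + 1 :=
  hz.card_le_finrank_succ.trans (Nat.add_le_add_right (Submodule.finrank_le _) 1)

theorem convexHull_eq_image_stdSimplex (s : Set E) :
    convexHull ℝ s =
      (fun q : (Fin (Module.finrank ℝ E + 1) → ℝ) × (Fin (Module.finrank ℝ E + 1) → E) =>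
        ∑ j, q.1 j • q.2 j) '' (stdSimplex ℝ _ ×ˢ univ.pi fun _ => s) := by
  apply subset_antisymm
  · intro x hx
    obtain ⟨ι, _, z, w, hzs, hz, hw₀, hw₁, rfl⟩ := eq_pos_convex_span_of_mem_convexHull hx
    obtain ⟨p, σ, hp, hpz⟩ := exists_fin_convex_combination_of_card_le
      hz.card_le_finrank_add_one z (fun i => (hw₀ i).le) hw₁
    exact ⟨(p, z ∘ σ), ⟨hp, fun j _ => hzs (mem_range_self _)⟩, hpz⟩
  · rintro _ ⟨⟨p, y⟩, ⟨hp, hy⟩, rfl⟩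
    exact (convex_convexHull ℝ s).sum_mem (fun j _ => hp.1 j) hp.2
      fun j _ => subset_convexHull ℝ s (hy j trivial)

theorem IsCompact.convexHull {s : Set E} (hs : IsCompact s) : IsCompact (convexHull ℝ s) := by
  rw [convexHull_eq_image_stdSimplex]
  refine ((isCompact_stdSimplex _ _).prod (isCompact_univ_pi fun _ => hs)).image ?_
  fun_prop

theorem exists_pos_convex_span_card_le_finrank_of_notMem_interior {s : Set E} {x : E}
    (hx : x ∈ convexHull ℝ s) (hint : x ∉ interior (convexHull ℝ s)) :
    ∃ (ι : Type u) (_ : Fintype ι) (z : ι → E) (w : ι → ℝ), Set.range z ⊆ s ∧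
      Fintype.card ι ≤ Module.finrank ℝ E ∧ (∀ i, 0 < w i) ∧ ∑ i, w i = 1 ∧
      ∑ i, w i • z i = x := by
  obtain ⟨ι, _, z, w, hzs, hz, hw₀, hw₁, hwz⟩ := eq_pos_convex_span_of_mem_convexHull hx
  refine ⟨ι, _, z, w, hzs, Nat.lt_succ_iff.1 <| hz.card_le_finrank_add_one.lt_of_ne
    fun hcard => hint ?_, hw₀, hw₁, hwz⟩
  let b : AffineBasis ι ℝ E := ⟨z, hz, hz.affineSpan_eq_top_iff_card_eq_finrank_add_one.2 hcard⟩
  refine interior_mono (convexHull_mono hzs) ?_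
  change x ∈ interior (convexHull ℝ (range b))
  rw [b.interior_convexHull]
  intro i
  rw [← hwz, ← Finset.univ.affineCombination_eq_linear_combination z w hw₁]
  change 0 < b.coord i (Finset.univ.affineCombination ℝ b w)
  rw [b.coord_apply_combination_of_mem (Finset.mem_univ i) hw₁]
  exact hw₀ i

end FiniteDimensional

theorem ConcaveOn.eq_of_le_of_map_sum_le {E ι : Type*} [AddCommGroup E] [Module ℝ E]
    {s : Set E} {φ f : E → ℝ} (hφ : ConcaveOn ℝ s φ) (hfφ : ∀ x ∈ s, f x ≤ φ x)
    {t : Finset ι} {w : ι → ℝ} {x : ι → E} (hw₀ : ∀ i ∈ t, 0 < w i) (hw₁ : ∑ i ∈ t, w i = 1)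
    (hx : ∀ i ∈ t, x i ∈ s) (h : φ (∑ i ∈ t, w i • x i) ≤ ∑ i ∈ t, w i • f (x i)) :
    ∀ i ∈ t, f (x i) = φ (x i) := by
  by_contra! ⟨i, hi, hne⟩
  have hlt : ∑ j ∈ t, w j • f (x j) < ∑ j ∈ t, w j • φ (x j) :=
    Finset.sum_lt_sum (fun j hj => smul_le_smul_of_nonneg_left (hfφ _ (hx j hj)) (hw₀ j hj).le)
      ⟨i, hi, smul_lt_smul_of_pos_left ((hfφ _ (hx i hi)).lt_of_ne hne) (hw₀ i hi)⟩
  linarith [hφ.le_map_sum (fun j hj => (hw₀ j hj).le) hw₁ hx]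

section Phi1

variable {d : ℕ} {f : (Fin d → ℝ) → ℝ}

theorem isCompact_graphHull (hf : ContinuousOn f (Cube d)) : IsCompact (graphHull d f) := by
  refine IsCompact.convexHull ?_
  have : {p : (Fin d → ℝ) × ℝ | p.1 ∈ Cube d ∧ p.2 = f p.1} = (fun x => (x, f x)) '' Cube d := by
    ext ⟨x, y⟩
    simp [eq_comm]
  rw [this]
  exact isCompact_Icc.image_of_continuousOn (continuousOn_id.prodMk hf)

theorem isCompact_fiber_graphHull (hf : ContinuousOn f (Cube d)) (x : Fin d → ℝ) :
    IsCompact {y | (x, y) ∈ graphHull d f} :=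
  (Topology.IsClosedEmbedding.of_continuous_injective_isClosedMap (.prodMk_right x)
    (Prod.mk_right_injective x) (isClosedMap_prodMk_left x)).isCompact_preimage
    (isCompact_graphHull hf)

theorem le_phi1 (hf : ContinuousOn f (Cube d)) {x : Fin d → ℝ} {y : ℝ}
    (h : (x, y) ∈ graphHull d f) : y ≤ phi1 d f x :=
  le_csSup (isCompact_fiber_graphHull hf x).bddAbove h

theorem apply_le_phi1 (hf : ContinuousOn f (Cube d)) {x : Fin d → ℝ} (hx : x ∈ Cube d) :
    f x ≤ phi1 d f x :=
  le_phi1 hf (subset_convexHull ℝ _ ⟨hx, rfl⟩)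

theorem mk_phi1_mem_graphHull (hf : ContinuousOn f (Cube d)) {x : Fin d → ℝ} (hx : x ∈ Cube d) :
    (x, phi1 d f x) ∈ graphHull d f :=
  (isCompact_fiber_graphHull hf x).sSup_mem ⟨f x, subset_convexHull ℝ _ ⟨hx, rfl⟩⟩

theorem mk_phi1_notMem_interior_graphHull (hf : ContinuousOn f (Cube d)) (x : Fin d → ℝ) :
    (x, phi1 d f x) ∉ interior (graphHull d f) := by
  intro h
  have hc : Tendsto (fun t : ℝ => (x, phi1 d f x + t)) (𝓝 0) (𝓝 (x, phi1 d f x)) := by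
    simpa using (Continuous.tendsto (f := fun t : ℝ => (x, phi1 d f x + t)) (by fun_prop) 0)
  obtain ⟨t, ht, htpos⟩ := ((hc.eventually (mem_interior_iff_mem_nhds.1 h)).filter_mono
    nhdsWithin_le_nhds |>.and (self_mem_nhdsWithin : ∀ᶠ t in 𝓝[>] (0 : ℝ), 0 < t)).exists
  linarith [le_phi1 hf ht]

theorem concaveOn_phi1 (hf : ContinuousOn f (Cube d)) : ConcaveOn ℝ (Cube d) (phi1 d f) :=
  ⟨convex_Icc 0 1, fun x hx y hy a b ha hb hab => le_phi1 hf <| by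
    have h := convex_convexHull ℝ _ (mk_phi1_mem_graphHull hf hx) (mk_phi1_mem_graphHull hf hy)
      ha hb hab
    simp only [Prod.smul_mk, Prod.mk_add_mk, smul_eq_mul] at h
    exact h⟩

end Phi1

/-- Lemma 2.3: every point is a convex combination of at most `d+1` points of the
coincidence set, realizing the value of `φ₁`. -/
theorem phi1_caratheodory (d : ℕ) (f : (Fin d → ℝ) → ℝ)
    (hf : ContinuousOn f (Cube d)) :
    ∀ x₀ ∈ Cube d, ∃ (x : Fin (d + 1) → (Fin d → ℝ)) (p : Fin (d + 1) → ℝ),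
      (∀ i, 0 ≤ p i) ∧ (∑ i, p i = 1) ∧ (∀ i, x i ∈ Cube d) ∧
      x₀ = ∑ i, p i • x i ∧
      (∀ i, f (x i) = phi1 d f (x i)) ∧
      phi1 d f x₀ = ∑ i, p i * f (x i) := by
  intro x₀ hx₀
  obtain ⟨ι, _, z, w, hz, hcard, hw₀, hw₁, hwz⟩ :=
    exists_pos_convex_span_card_le_finrank_of_notMem_interior (mk_phi1_mem_graphHull hf hx₀)
      (mk_phi1_notMem_interior_graphHull hf x₀)
  have hzc : ∀ i, (z i).1 ∈ Cube d := fun i => (hz (mem_range_self i)).1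
  have hzf : ∀ i, (z i).2 = f (z i).1 := fun i => (hz (mem_range_self i)).2
  have hx : ∑ i, w i • (z i).1 = x₀ := by simpa [Prod.fst_sum] using congrArg Prod.fst hwz
  have hy : ∑ i, w i • f (z i).1 = phi1 d f x₀ := by
    simpa [Prod.snd_sum, hzf] using congrArg Prod.snd hwz
  have hcoinc : ∀ i, f (z i).1 = phi1 d f (z i).1 := fun i =>
    (concaveOn_phi1 hf).eq_of_le_of_map_sum_le (fun _ => apply_le_phi1 hf)
      (fun i _ => hw₀ i) hw₁ (fun i _ => hzc i) (by rw [hx, hy]) i (Finset.mem_univ i)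
  obtain ⟨p, σ, hp, hpz⟩ :=
    exists_fin_convex_combination_of_card_le (by simpa using hcard) z (fun i => (hw₀ i).le) hw₁
  rw [hwz] at hpz
  refine ⟨fun j => (z (σ j)).1, p, hp.1, hp.2, fun j => hzc _, ?_, fun j => hcoinc _, ?_⟩
  · simpa [Prod.fst_sum] using (congrArg Prod.fst hpz).symm
  · simpa [Prod.snd_sum, hzf] using (congrArg Prod.snd hpz).symm
end
end

section
/- There exists a dense Gδ subset G of C([0,1]^d) such that for every f ∈ G and every x₀ in the face F = {x ∈ [0,1]^d : x_d = 0}, the one-sided partial derivative ∂_{d,+}φ₁(x₀) = lim_{t→0+} (φ₁(x₀ + t e_d) − φ₁(x₀))/t equals +∞, where φ₁ is the concave function on top of the convex hull of the graph of f. -/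
open Set Metric Filter

noncomputable section

def graphHullC {d : ℕ} (F : C(Cube d, ℝ)) : Set ((Fin d → ℝ) × ℝ) :=
  convexHull ℝ {p : (Fin d → ℝ) × ℝ | ∃ x : Cube d, p = (↑x, F x)}

def phi1C {d : ℕ} (F : C(Cube d, ℝ)) (x : Fin d → ℝ) : ℝ :=
  sSup {y : ℝ | (x, y) ∈ graphHullC F}

open Topology

/-!
`φ₁` is the least concave majorant of `f` on the cube, so it is concave and 1-Lipschitz
as a function of `f`. Hence for each `n` the set of `f` for which `φ₁` has, uniformly along the
face, a secant slope in direction `e_j` exceeding `n` is open. It is dense: replacing `f` by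
`max f (f ∘ π + ε √x_j - K x_j)`, with `π` the projection onto the face and `K` large enough
(by uniform continuity) that this is `2ε`-close to `f`, makes `f` itself rise by `ε √t - K t ≫ t`
from every face point `z` to `z + t e_j`. Since `x_j ≥ 0` on the graph, a point of the hull
over the face is a convex combination of graph points over the face; translating them by
`t e_j` transfers the rise to `φ₁`. By Baire the intersection over `n` is a dense `Gδ`, and
concavity makes the secant slopes decrease in `t`, so they tend to `+∞`.
-/

lemma concaveOn_sSup_fiber {E : Type*} [AddCommGroup E] [Module ℝ E] {H : Set (E × ℝ)}
    (hH : Convex ℝ H) {s : Set E} (hs : Convex ℝ s) (hne : ∀ x ∈ s, ∃ y, (x, y) ∈ H)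
    (hbdd : ∀ x ∈ s, BddAbove {y | (x, y) ∈ H}) :
    ConcaveOn ℝ s fun x => sSup {y | (x, y) ∈ H} := by
  refine ⟨hs, fun x hx x' hx' a b ha hb hab => ?_⟩
  have hne' : ∀ x ∈ s, {y | (x, y) ∈ H}.Nonempty := hne
  rw [← Real.sSup_smul_of_nonneg ha, ← Real.sSup_smul_of_nonneg hb,
    ← csSup_add (hne' x hx).smul_set ((hbdd x hx).smul_of_nonneg ha)
      (hne' x' hx').smul_set ((hbdd x' hx').smul_of_nonneg hb)]
  refine csSup_le_csSup (hbdd _ (hs hx hx' ha hb hab))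
    ((hne' x hx).smul_set.add (hne' x' hx').smul_set) ?_
  rintro _ ⟨_, ⟨y, hy, rfl⟩, _, ⟨y', hy', rfl⟩, rfl⟩
  simpa using hH hy hy' ha hb hab

lemma convexHull_inter_ker_subset {𝕜 E : Type*} [Field 𝕜] [LinearOrder 𝕜]
    [IsStrictOrderedRing 𝕜] [AddCommGroup E] [Module 𝕜 E] {s : Set E} (ℓ : E →ₗ[𝕜] 𝕜)
    (hs : ∀ x ∈ s, 0 ≤ ℓ x) :
    convexHull 𝕜 s ∩ {x | ℓ x = 0} ⊆ convexHull 𝕜 (s ∩ {x | ℓ x = 0}) := by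
  suffices convexHull 𝕜 s ⊆
      {x | 0 ≤ ℓ x ∧ (ℓ x = 0 → x ∈ convexHull 𝕜 (s ∩ {x | ℓ x = 0}))} from
    fun x ⟨hx, hx0⟩ => (this hx).2 hx0
  refine convexHull_min (fun x hx => ⟨hs x hx, fun h => subset_convexHull 𝕜 _ ⟨hx, h⟩⟩) ?_
  refine convex_iff_pairwise_pos.2 fun x ⟨hx, hx0⟩ y ⟨hy, hy0⟩ _ a b ha hb hab => ?_
  simp only [mem_ofPred_eq, map_add, map_smul, smul_eq_mul]
  refine ⟨add_nonneg (mul_nonneg ha.le hx) (mul_nonneg hb.le hy), fun h => ?_⟩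
  obtain ⟨hax, hby⟩ := (add_eq_zero_iff_of_nonneg (mul_nonneg ha.le hx) (mul_nonneg hb.le hy)).1 h
  exact convex_convexHull 𝕜 _ (hx0 ((mul_eq_zero.1 hax).resolve_left ha.ne'))
    (hy0 ((mul_eq_zero.1 hby).resolve_left hb.ne')) ha.le hb.le hab

lemma ConcaveOn.tendsto_slope_atTop {𝕜 : Type*} [Field 𝕜] [LinearOrder 𝕜]
    [IsStrictOrderedRing 𝕜] [TopologicalSpace 𝕜] [OrderTopology 𝕜] {s : Set 𝕜} {g : 𝕜 → 𝕜}
    {a : 𝕜} (hg : ConcaveOn 𝕜 s g) (ha : a ∈ s) (hunb : ∀ M, ∃ t ∈ s, a < t ∧ M ≤ slope g a t) :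
    Tendsto (slope g a) (𝓝[>] a) atTop := by
  refine tendsto_atTop.2 fun M => ?_
  obtain ⟨t, ht, hat, hM⟩ := hunb M
  filter_upwards [Ioc_mem_nhdsGT hat] with u ⟨hau, hut⟩
  have hu : u ∈ s := hg.1.ordConnected.out ha ht ⟨hau.le, hut⟩
  exact hM.trans (hg.antitoneOn_slope_gt ha ⟨hu, hau⟩ ⟨ht, hat⟩ hut)

lemma ContinuousMap.exists_le_add_mul_dist {X : Type*} [PseudoMetricSpace X] [CompactSpace X]
    (f : C(X, ℝ)) {ε : ℝ} (hε : 0 < ε) : ∃ K, 0 ≤ K ∧ ∀ x y, f x ≤ f y + ε + K * dist x y := by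
  obtain ⟨δ, hδ, hf⟩ := Metric.uniformContinuous_iff.1
    (CompactSpace.uniformContinuous_of_continuous f.continuous) ε hε
  refine ⟨2 * ‖f‖ / δ, by positivity, fun x y => ?_⟩
  have hK : 0 ≤ 2 * ‖f‖ / δ * dist x y := by positivity
  rcases lt_or_ge (dist x y) δ with hxy | hxy
  · linarith [(abs_lt.1 (Real.dist_eq _ _ ▸ hf hxy)).2]
  · have h2 : 2 * ‖f‖ ≤ 2 * ‖f‖ / δ * dist x y := by
      rw [div_mul_eq_mul_div, le_div_iff₀ hδ]; gcongr
    have hx := abs_le.1 (f.norm_coe_le_norm x)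
    have hy := abs_le.1 (f.norm_coe_le_norm y)
    linarith [hx.2, hy.1]

lemma exists_mul_le_mul_sqrt {a b : ℝ} (ha : 0 < a) (hb : 0 ≤ b) :
    ∃ t ∈ Ioc (0 : ℝ) 1, b * t ≤ a * √t := by
  set q := a / (a + b)
  have hq0 : 0 < q := by positivity
  have hq : q * (a + b) = a := div_mul_cancel₀ a (by positivity)
  refine ⟨q ^ 2, ⟨by positivity, ?_⟩, ?_⟩
  · exact pow_le_one₀ hq0.le ((div_le_one (by positivity)).2 (by linarith))
  · rw [Real.sqrt_sq hq0.le]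
    nlinarith [mul_nonneg (sq_nonneg q) ha.le]

lemma Pi.add_smul_single_eq_update {ι R : Type*} [DecidableEq ι] [Semiring R] {x : ι → R}
    {j : ι} (hx : x j = 0) (t : R) : x + t • Pi.single j 1 = Function.update x j t := by
  ext k
  rcases eq_or_ne k j with rfl | hk
  · simp [hx]
  · simp [hk]

section Cube

variable {d : ℕ}

instance : CompactSpace (Cube d) := isCompact_iff_compactSpace.mp isCompact_Icc

lemma update_mem_cube {x : Fin d → ℝ} (hx : x ∈ Cube d) (j : Fin d) {a : ℝ}
    (ha : a ∈ Icc (0 : ℝ) 1) : Function.update x j a ∈ Cube d := by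
  rw [Cube, ← Set.pi_univ_Icc] at hx ⊢
  exact (Set.update_mem_pi_iff_of_mem hx).2 fun _ => ha

lemma add_smul_single_mem_cube {x : Fin d → ℝ} (hx : x ∈ Cube d) {j : Fin d} (h0 : x j = 0)
    {t : ℝ} (ht : t ∈ Icc (0 : ℝ) 1) : x + t • Pi.single j 1 ∈ Cube d := by
  rw [Pi.add_smul_single_eq_update h0]
  exact update_mem_cube hx j ht

def faceProj (j : Fin d) : C(Cube d, Cube d) where
  toFun x := ⟨Function.update x j 0, update_mem_cube x.2 j ⟨le_rfl, zero_le_one⟩⟩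
  continuous_toFun := by fun_prop

lemma dist_faceProj_le (j : Fin d) (x : Cube d) : dist (faceProj j x) x ≤ (x : Fin d → ℝ) j := by
  have hxj : 0 ≤ (x : Fin d → ℝ) j := x.2.1 j
  refine (dist_pi_le_iff hxj).2 fun k => ?_
  rcases eq_or_ne k j with rfl | hk
  · simp [faceProj, Real.dist_eq, abs_of_nonneg hxj]
  · simp [faceProj, hk, hxj]

lemma mem_graphHullC (F : C(Cube d, ℝ)) (x : Cube d) : ((x : Fin d → ℝ), F x) ∈ graphHullC F :=
  subset_convexHull ℝ _ ⟨x, rfl⟩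

lemma graphHullC_subset_hypograph {F : C(Cube d, ℝ)} {g : (Fin d → ℝ) → ℝ}
    (hg : ConcaveOn ℝ (Cube d) g) (hFg : ∀ x : Cube d, F x ≤ g x) :
    graphHullC F ⊆ {p | p.1 ∈ Cube d ∧ p.2 ≤ g p.1} :=
  convexHull_min (by rintro _ ⟨x, rfl⟩; exact ⟨x.2, hFg x⟩) hg.convex_hypograph

lemma bddAbove_fiber_graphHullC (F : C(Cube d, ℝ)) (x : Fin d → ℝ) :
    BddAbove {y | (x, y) ∈ graphHullC F} :=
  ⟨‖F‖, fun _ hy => (graphHullC_subset_hypograph (concaveOn_const ‖F‖ (convex_Icc 0 1))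
    (fun z => (abs_le.1 (F.norm_coe_le_norm z)).2) hy).2⟩

lemma le_phi1C {F : C(Cube d, ℝ)} {x : Fin d → ℝ} {y : ℝ} (h : (x, y) ∈ graphHullC F) :
    y ≤ phi1C F x :=
  le_csSup (bddAbove_fiber_graphHullC F x) h

lemma phi1C_concaveOn (F : C(Cube d, ℝ)) : ConcaveOn ℝ (Cube d) (phi1C F) :=
  concaveOn_sSup_fiber (convex_convexHull ℝ _) (convex_Icc 0 1)
    (fun x hx => ⟨_, mem_graphHullC F ⟨x, hx⟩⟩) (fun x _ => bddAbove_fiber_graphHullC F x)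

lemma phi1C_le_of_concaveOn {F : C(Cube d, ℝ)} {g : (Fin d → ℝ) → ℝ}
    (hg : ConcaveOn ℝ (Cube d) g) (hFg : ∀ x : Cube d, F x ≤ g x) {x : Fin d → ℝ}
    (hx : x ∈ Cube d) : phi1C F x ≤ g x :=
  csSup_le ⟨_, mem_graphHullC F ⟨x, hx⟩⟩ fun _ hy => (graphHullC_subset_hypograph hg hFg hy).2

lemma phi1C_le_phi1C_add_dist (F F' : C(Cube d, ℝ)) {x : Fin d → ℝ} (hx : x ∈ Cube d) :
    phi1C F x ≤ phi1C F' x + dist F F' :=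
  phi1C_le_of_concaveOn ((phi1C_concaveOn F').add_const _) (fun z =>
    calc F z ≤ F' z + dist F F' := by
          linarith [(abs_le.1 (Real.dist_eq _ _ ▸ F.dist_apply_le_dist (g := F') z)).2]
      _ ≤ phi1C F' z + dist F F' := by gcongr; exact le_phi1C (mem_graphHullC F' z)) hx

lemma phi1C_concaveOn_line (F : C(Cube d, ℝ)) {j : Fin d} {x₀ : Fin d → ℝ} (hx₀ : x₀ ∈ Cube d)
    (h0 : x₀ j = 0) : ConcaveOn ℝ (Icc 0 1) fun t : ℝ => phi1C F (x₀ + t • Pi.single j 1) :=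
  (((phi1C_concaveOn F).translate_right x₀).comp_linearMap
    (LinearMap.toSpanSingleton ℝ _ (Pi.single j 1))).subset
    (fun _ ht => add_smul_single_mem_cube hx₀ h0 ht) (convex_Icc 0 1)

lemma phi1C_add_le_phi1C_add_smul_single {F : C(Cube d, ℝ)} {j : Fin d} {t c : ℝ}
    (ht : t ∈ Icc (0 : ℝ) 1)
    (hF : ∀ z w : Cube d, (z : Fin d → ℝ) j = 0 →
      (w : Fin d → ℝ) = (z : Fin d → ℝ) + t • Pi.single j 1 → F z + c ≤ F w)
    {x₀ : Fin d → ℝ} (hx₀ : x₀ ∈ Cube d) (h0 : x₀ j = 0) :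
    phi1C F x₀ + c ≤ phi1C F (x₀ + t • Pi.single j 1) := by
  let ℓ : (Fin d → ℝ) × ℝ →ₗ[ℝ] ℝ := (LinearMap.proj j).comp (LinearMap.fst ℝ _ _)
  have hshift : convexHull ℝ ({p | ∃ x : Cube d, p = (↑x, F x)} ∩ {p | ℓ p = 0}) ⊆
      (· + (t • Pi.single j 1, c)) ⁻¹' {p | p.1 ∈ Cube d ∧ p.2 ≤ phi1C F p.1} := by
    refine convexHull_min ?_ ((phi1C_concaveOn F).convex_hypograph.translate_preimage_left _)
    rintro _ ⟨⟨z, rfl⟩, hz⟩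
    have hw := add_smul_single_mem_cube z.2 hz ht
    exact ⟨hw, (hF z ⟨_, hw⟩ hz rfl).trans (le_phi1C (mem_graphHullC F ⟨_, hw⟩))⟩
  refine le_sub_iff_add_le.1 (csSup_le ⟨_, mem_graphHullC F ⟨x₀, hx₀⟩⟩ fun y hy => ?_)
  have hface := convexHull_inter_ker_subset ℓ (by rintro _ ⟨z, rfl⟩; exact z.2.1 j) ⟨hy, h0⟩
  exact le_sub_iff_add_le.2 (hshift hface).2

def raiseOffFace (F : C(Cube d, ℝ)) (j : Fin d) (ε K : ℝ) : C(Cube d, ℝ) :=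
  F ⊔ ⟨fun x => F (faceProj j x) + ε * √((x : Fin d → ℝ) j) - K * (x : Fin d → ℝ) j,
    by
      have hj : Continuous fun x : Cube d => (x : Fin d → ℝ) j :=
        (continuous_apply j).comp continuous_subtype_val
      exact ((map_continuous F).comp (faceProj j).continuous).add
        (continuous_const.mul (Real.continuous_sqrt.comp hj)) |>.sub (continuous_const.mul hj)⟩

lemma dist_raiseOffFace_le {F : C(Cube d, ℝ)} (j : Fin d) {ε K : ℝ} (hε : 0 ≤ ε) (hK0 : 0 ≤ K)
    (hK : ∀ x y, F x ≤ F y + ε + K * dist x y) : dist (raiseOffFace F j ε K) F ≤ 2 * ε := by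
  refine (ContinuousMap.dist_le (by positivity)).2 fun x => ?_
  have hsqrt : ε * √((x : Fin d → ℝ) j) ≤ ε :=
    mul_le_of_le_one_right hε (Real.sqrt_le_one.2 (x.2.2 j))
  have hproj : F (faceProj j x) ≤ F x + ε + K * (x : Fin d → ℝ) j :=
    (hK _ x).trans (by gcongr; exact dist_faceProj_le j x)
  rw [raiseOffFace, ContinuousMap.sup_apply, Real.dist_eq, abs_of_nonneg (by simp),
    sub_le_iff_le_add']
  exact max_le (by linarith) (by simp only [ContinuousMap.coe_mk]; linarith)

lemma raiseOffFace_add_le {F : C(Cube d, ℝ)} {j : Fin d} (ε K : ℝ) {t : ℝ} (z w : Cube d)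
    (hz : (z : Fin d → ℝ) j = 0) (hw : (w : Fin d → ℝ) = (z : Fin d → ℝ) + t • Pi.single j 1) :
    raiseOffFace F j ε K z + (ε * √t - K * t) ≤ raiseOffFace F j ε K w := by
  rw [Pi.add_smul_single_eq_update hz] at hw
  have hproj_z : faceProj j z = z := Subtype.ext (by simp [faceProj, ← hz])
  have hproj_w : faceProj j w = z := Subtype.ext (by simp [faceProj, hw, ← hz])
  have hwj : (w : Fin d → ℝ) j = t := by simp [hw]
  simp only [raiseOffFace, ContinuousMap.sup_apply, ContinuousMap.coe_mk, hproj_z, hproj_w, hz,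
    hwj, Real.sqrt_zero, mul_zero, sub_zero, add_zero, max_self]
  exact le_max_of_le_right (by rw [add_sub_assoc])

def steepOnFace (d : ℕ) (j : Fin d) (n : ℕ) : Set C(Cube d, ℝ) :=
  {F | ∃ t ∈ Ioc (0 : ℝ) 1, ∃ δ > 0, ∀ x₀ ∈ Cube d, x₀ j = 0 →
    phi1C F x₀ + n * t + δ ≤ phi1C F (x₀ + t • Pi.single j 1)}

lemma isOpen_steepOnFace (j : Fin d) (n : ℕ) : IsOpen (steepOnFace d j n) := by
  refine Metric.isOpen_iff.2 fun F ⟨t, ht, δ, hδ, hF⟩ => ⟨δ / 4, by positivity, fun F' hF' =>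
    ⟨t, ht, δ / 2, by positivity, fun x₀ hx₀ h0 => ?_⟩⟩
  have h1 := phi1C_le_phi1C_add_dist F' F hx₀
  have h2 :=
    phi1C_le_phi1C_add_dist F F' (add_smul_single_mem_cube hx₀ h0 (Ioc_subset_Icc_self ht))
  rw [mem_ball] at hF'
  rw [dist_comm] at h2
  linarith [hF x₀ hx₀ h0]

lemma dense_steepOnFace (j : Fin d) (n : ℕ) : Dense (steepOnFace d j n) := by
  refine Metric.dense_iff.2 fun F r hr => ?_
  have hε : 0 < r / 3 := by positivity
  obtain ⟨K, hK, hFK⟩ := F.exists_le_add_mul_dist hε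
  obtain ⟨t, ht, hgain⟩ := exists_mul_le_mul_sqrt hε (show (0 : ℝ) ≤ n + 1 + K by positivity)
  refine ⟨raiseOffFace F j (r / 3) K, mem_ball.2 ?_, t, ht, t, ht.1, fun x₀ hx₀ h0 => ?_⟩
  · linarith [dist_raiseOffFace_le j hε.le hK hFK]
  · have := phi1C_add_le_phi1C_add_smul_single (c := n * t + t) (Ioc_subset_Icc_self ht)
      (fun z w hz hw => by linarith [raiseOffFace_add_le (F := F) (r / 3) K z w hz hw]) hx₀ h0
    linarith

end Cube

/-- Part of Lemma 2.4: for generic `f`, at every point of the face `{x_j = 0}` the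
one-sided partial derivative of `φ₁` in the `j`-th inward direction is `+∞`. -/
theorem generic_phi1_infinite_derivative_on_face (d : ℕ) (j : Fin d) :
    ∃ G : Set C(Cube d, ℝ), Dense G ∧ IsGδ G ∧
      ∀ F ∈ G, ∀ x₀ ∈ Cube d, x₀ j = 0 →
        Tendsto
          (fun t : ℝ =>
            (phi1C F (x₀ + t • (Pi.single j 1 : Fin d → ℝ)) - phi1C F x₀) / t)
          (nhdsWithin 0 (Set.Ioi 0)) atTop := by
  refine ⟨⋂ n : ℕ, steepOnFace d j n,
    dense_iInter_of_isOpen (isOpen_steepOnFace j) (dense_steepOnFace j),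
    .iInter fun n => (isOpen_steepOnFace j n).isGδ, fun F hF x₀ hx₀ h0 => ?_⟩
  have hsteep : ∀ M : ℝ, ∃ t ∈ Icc (0 : ℝ) 1, 0 < t ∧
      M ≤ slope (fun t : ℝ => phi1C F (x₀ + t • Pi.single j 1)) 0 t := by
    intro M
    obtain ⟨n, hn⟩ := exists_nat_ge M
    obtain ⟨t, ht, δ, hδ, hFt⟩ := mem_iInter.1 hF n
    refine ⟨t, Ioc_subset_Icc_self ht, ht.1, ?_⟩
    rw [slope_def_field, sub_zero, le_div_iff₀ ht.1, zero_smul, add_zero]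
    nlinarith [hFt x₀ hx₀ h0, ht.1]
  simpa [slope_fun_def_field] using
    (phi1C_concaveOn_line F hx₀ h0).tendsto_slope_atTop (left_mem_Icc.2 zero_le_one) hsteep
end
end
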